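/- The induction of the Schur function in noncommuting variables indexed by the one-block partition satisfies x_{1̂_{n-1}}↑ = Σ_σ x_σ, summed over all set partitions σ ⊢ [n] with at most two blocks in which every block contains n or n-1. -/

import Mathlib

open scoped Classical
noncomputable section

instance (n : ℕ) : Fintype (Setoid (Fin n)) := by
  haveI : Finite (Setoid (Fin n)) :=
    Finite.of_injective (fun s : Setoid (Fin n) => s.r)
      (fun a b h => Setoid.ext fun x y => by rw [show a.r = b.r from h])
  exact Fintype.ofFinite _

/-- Homogeneous degree-`n` part of formal power series in noncommuting variables
`x_0, x_1, x_2, …`: a coefficient for each word (monomial) of length `n`. -/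
abbrev NCF (n : ℕ) := (Fin n → ℕ) → ℚ

/-- Power sum symmetric function in noncommuting variables. -/
def pfun {n : ℕ} (π : Setoid (Fin n)) : NCF n :=
  fun w => if ∀ i j : Fin n, π.r i j → w i = w j then 1 else 0

/-- Elementary symmetric function in noncommuting variables. -/
def efun {n : ℕ} (π : Setoid (Fin n)) : NCF n :=
  fun w => if ∀ i j : Fin n, i ≠ j → π.r i j → w i ≠ w j then 1 else 0

/-- Chromatic symmetric function in noncommuting variables. -/
def YG {n : ℕ} (G : SimpleGraph (Fin n)) : NCF n :=
  fun w => if ∀ i j : Fin n, G.Adj i j → w i ≠ w j then 1 else 0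

/-- Product (concatenation of monomials) of noncommuting series. -/
def ncmul {n m : ℕ} (f : NCF n) (g : NCF m) : NCF (n + m) :=
  fun w => f (fun i => w (Fin.castAdd m i)) * g (fun j => w (Fin.natAdd n j))

/-- `π` is a connected partition of `G`: each block induces a connected subgraph. -/
def connPart {n : ℕ} (G : SimpleGraph (Fin n)) (π : Setoid (Fin n)) : Prop :=
  ∀ b ∈ π.classes, (G.induce b).Connected

/-- `mu` is the Möbius function of the lattice of set partitions of `[n]`
(ordered by refinement). -/
def MoebiusPi (n : ℕ) (mu : Setoid (Fin n) → Setoid (Fin n) → ℚ) : Prop :=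
  ∀ σ π : Setoid (Fin n), σ ≤ π →
    (∑ τ : Setoid (Fin n), if σ ≤ τ ∧ τ ≤ π then mu σ τ else 0) = if σ = π then 1 else 0

/-- Schur function in noncommuting variables (relative to a Möbius function `mu`). -/
def xf {n : ℕ} (mu : Setoid (Fin n) → Setoid (Fin n) → ℚ) (π : Setoid (Fin n)) : NCF n :=
  ∑ σ : Setoid (Fin n), if σ ≤ π then mu σ π • pfun σ else 0

/-- The disjoint union of complete graphs on the blocks of `π`. -/
def graphOf {n : ℕ} (π : Setoid (Fin n)) : SimpleGraph (Fin n) where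
  Adj i j := i ≠ j ∧ π.r i j
  symm := ⟨fun i j h => ⟨Ne.symm h.1, π.iseqv.symm h.2⟩⟩
  loopless := ⟨fun i h => h.1 rfl⟩


/-- The induction operator: duplicate the last variable of each monomial. -/
def up {m : ℕ} (f : NCF (m + 1)) : NCF (m + 2) :=
  fun w => if w (Fin.last (m + 1)) = w ((Fin.last m).castSucc) then f (Fin.init w) else 0

/-! ### Auxiliary Möbius lemmas -/

lemma moebius_mz {n : ℕ} {mu : Setoid (Fin n) → Setoid (Fin n) → ℚ} (h : MoebiusPi n mu)
    (σ π : Setoid (Fin n)) :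
    (∑ τ : Setoid (Fin n), if σ ≤ τ ∧ τ ≤ π then mu σ τ else 0) = if σ = π then 1 else 0 := by
  by_cases hle : σ ≤ π
  · exact h σ π hle
  · rw [if_neg (by rintro rfl; exact hle le_rfl)]
    apply Finset.sum_eq_zero
    intro τ _
    rw [if_neg]
    rintro ⟨h1, h2⟩
    exact hle (h1.trans h2)

lemma moebius_zm {n : ℕ} {mu : Setoid (Fin n) → Setoid (Fin n) → ℚ} (h : MoebiusPi n mu)
    (ρ σ : Setoid (Fin n)) :
    (∑ τ : Setoid (Fin n), if ρ ≤ τ ∧ τ ≤ σ then mu τ σ else 0) = if ρ = σ then 1 else 0 := by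
  set M : Matrix (Setoid (Fin n)) (Setoid (Fin n)) ℚ :=
    fun a b => if a ≤ b then mu a b else 0 with hM
  set Z : Matrix (Setoid (Fin n)) (Setoid (Fin n)) ℚ :=
    fun a b => if a ≤ b then 1 else 0 with hZ
  have hMZ : M * Z = 1 := by
    ext a b
    rw [Matrix.mul_apply, Matrix.one_apply, ← moebius_mz h a b]
    apply Finset.sum_congr rfl
    intro τ _
    by_cases h1 : a ≤ τ <;> by_cases h2 : τ ≤ b <;> simp [hM, hZ, h1, h2]
  have hZM : Z * M = 1 := mul_eq_one_comm.mp hMZ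
  have key := congrFun (congrFun hZM ρ) σ
  rw [Matrix.mul_apply, Matrix.one_apply] at key
  rw [← key]
  apply Finset.sum_congr rfl
  intro τ _
  by_cases h1 : ρ ≤ τ <;> by_cases h2 : τ ≤ σ <;> simp [hM, hZ, h1, h2]

/-! ### Maps between partitions of `[m+2]` and `[m+1]` -/

def qmap (m : ℕ) : Fin (m + 2) → Fin (m + 1) := fun i => ⟨min i.1 m, by omega⟩

def jmap {m : ℕ} (σ : Setoid (Fin (m + 1))) : Setoid (Fin (m + 2)) :=
  ⟨fun i k => σ.r (qmap m i) (qmap m k),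
    ⟨fun _ => σ.refl' _, fun h => σ.symm' h, fun h h' => σ.trans' h h'⟩⟩

def rmap {m : ℕ} (τ : Setoid (Fin (m + 2))) : Setoid (Fin (m + 1)) :=
  ⟨fun i k => τ.r i.castSucc k.castSucc,
    ⟨fun _ => τ.refl' _, fun h => τ.symm' h, fun h h' => τ.trans' h h'⟩⟩

lemma q_castSucc {m : ℕ} (a : Fin (m + 1)) : qmap m a.castSucc = a := by
  apply Fin.ext
  simp only [qmap, Fin.coe_castSucc]
  omega

lemma q_AB {m : ℕ} : qmap m (Fin.last (m + 1)) = qmap m ((Fin.last m).castSucc) := by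
  apply Fin.ext
  simp [qmap, Fin.last]

lemma q_eq_iff {m : ℕ} {i k : Fin (m + 2)} : qmap m i = qmap m k ↔
    i = k ∨ (i = Fin.last (m + 1) ∧ k = (Fin.last m).castSucc)
      ∨ (i = (Fin.last m).castSucc ∧ k = Fin.last (m + 1)) := by
  simp only [Fin.ext_iff, qmap, Fin.coe_castSucc, Fin.val_last]
  omega

lemma r_j {m : ℕ} (σ : Setoid (Fin (m + 1))) : rmap (jmap σ) = σ := by
  apply Setoid.ext
  intro x y
  show σ.r (qmap m x.castSucc) (qmap m y.castSucc) ↔ σ.r x y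
  rw [q_castSucc, q_castSucc]

lemma castSucc_q_rel {m : ℕ} {τ : Setoid (Fin (m + 2))}
    (hab : τ.r (Fin.last (m + 1)) ((Fin.last m).castSucc)) (i : Fin (m + 2)) :
    τ.r ((qmap m i).castSucc) i := by
  by_cases h : i = Fin.last (m + 1)
  · subst h
    have : (qmap m (Fin.last (m + 1))).castSucc = (Fin.last m).castSucc := by
      apply Fin.ext; simp [qmap, Fin.last]
    rw [this]
    exact τ.symm' hab
  · have : (qmap m i).castSucc = i := by
      apply Fin.ext
      simp only [qmap, Fin.coe_castSucc]
      have := i.isLt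
      have : i.1 ≠ m + 1 := fun hc => h (Fin.ext hc)
      omega
    rw [this]

lemma j_r {m : ℕ} {τ : Setoid (Fin (m + 2))}
    (hab : τ.r (Fin.last (m + 1)) ((Fin.last m).castSucc)) : jmap (rmap τ) = τ := by
  apply Setoid.ext
  intro x y
  show τ.r ((qmap m x).castSucc) ((qmap m y).castSucc) ↔ τ.r x y
  constructor
  · intro h
    exact τ.trans' (τ.trans' (τ.symm' (castSucc_q_rel hab x)) h) (castSucc_q_rel hab y)
  · intro h
    exact τ.trans' (τ.trans' (castSucc_q_rel hab x) h) (τ.symm' (castSucc_q_rel hab y))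

lemma j_mono {m : ℕ} {σ σ' : Setoid (Fin (m + 1))} (h : σ ≤ σ') : jmap σ ≤ jmap σ' :=
  fun _ _ hr => h hr

lemma r_mono {m : ℕ} {τ τ' : Setoid (Fin (m + 2))} (h : τ ≤ τ') : rmap τ ≤ rmap τ' :=
  fun _ _ hr => h hr

lemma j_top {m : ℕ} : jmap (⊤ : Setoid (Fin (m + 1))) = (⊤ : Setoid (Fin (m + 2))) := by
  apply Setoid.ext; intro x y
  exact ⟨fun _ => trivial, fun _ => trivial⟩

lemma r_top {m : ℕ} : rmap (⊤ : Setoid (Fin (m + 2))) = (⊤ : Setoid (Fin (m + 1))) := by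
  apply Setoid.ext; intro x y
  exact ⟨fun _ => trivial, fun _ => trivial⟩

/-- The partition of `[m+2]` whose only nontrivial block is the top two elements. -/
def pairAB (m : ℕ) : Setoid (Fin (m + 2)) := jmap ⊥

lemma pair_le_iff {m : ℕ} {τ : Setoid (Fin (m + 2))} :
    pairAB m ≤ τ ↔ τ.r (Fin.last (m + 1)) ((Fin.last m).castSucc) := by
  constructor
  · intro h
    exact h (show qmap m _ = qmap m _ from q_AB)
  · intro hab x y hxy
    have : qmap m x = qmap m y := hxy
    rcases q_eq_iff.mp this with rfl | ⟨rfl, rfl⟩ | ⟨rfl, rfl⟩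
    · exact τ.refl' x
    · exact hab
    · exact τ.symm' hab

lemma pair_le_j {m : ℕ} (σ : Setoid (Fin (m + 1))) : pairAB m ≤ jmap σ := by
  rw [pair_le_iff]
  show σ.r (qmap m (Fin.last (m + 1))) (qmap m ((Fin.last m).castSucc))
  rw [q_AB]

lemma le_j_iff {m : ℕ} {ρ : Setoid (Fin (m + 2))} {σ : Setoid (Fin (m + 1))} :
    ρ ≤ jmap σ ↔ rmap (ρ ⊔ pairAB m) ≤ σ := by
  constructor
  · intro h
    have h2 : ρ ⊔ pairAB m ≤ jmap σ := sup_le h (pair_le_j σ)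
    have := r_mono h2
    rwa [r_j] at this
  · intro h
    have hab : (ρ ⊔ pairAB m).r (Fin.last (m + 1)) ((Fin.last m).castSucc) :=
      pair_le_iff.mp le_sup_right
    calc ρ ≤ ρ ⊔ pairAB m := le_sup_left
    _ = jmap (rmap (ρ ⊔ pairAB m)) := (j_r hab).symm
    _ ≤ jmap σ := j_mono h

/-- Reindexing sums over partitions of `[m+2]` containing the pair relation. -/
lemma sum_reindex {m : ℕ} (f : Setoid (Fin (m + 2)) → ℚ) :
    (∑ σ : Setoid (Fin (m + 1)), f (jmap σ)) =
      ∑ τ : Setoid (Fin (m + 2)), if pairAB m ≤ τ then f τ else 0 := by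
  rw [← Finset.sum_filter]
  apply Finset.sum_nbij' (i := jmap) (j := rmap)
  · intro σ _
    simp only [Finset.mem_filter, Finset.mem_univ, true_and]
    exact pair_le_j σ
  · intro τ _
    exact Finset.mem_univ _
  · intro σ _
    exact r_j σ
  · intro τ hτ
    simp only [Finset.mem_filter, Finset.mem_univ, true_and] at hτ
    exact j_r (pair_le_iff.mp hτ)
  · intro σ _
    rfl

/-- The combinatorial characterization of the index set. -/
lemma cond_iff {m : ℕ} (ρ : Setoid (Fin (m + 2))) :
    (ρ.classes.ncard ≤ 2 ∧
      ∀ b ∈ ρ.classes, Fin.last (m + 1) ∈ b ∨ (Fin.last m).castSucc ∈ b)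
    ↔ ρ ⊔ pairAB m = ⊤ := by
  constructor
  · rintro ⟨-, hall⟩
    set s := ρ ⊔ pairAB m with hs
    have hρs : ρ ≤ s := le_sup_left
    have hAB : s.r (Fin.last (m + 1)) ((Fin.last m).castSucc) := pair_le_iff.mp le_sup_right
    have key : ∀ i, s.r i (Fin.last (m + 1)) := by
      intro i
      rcases hall {x | ρ.r x i} ⟨i, rfl⟩ with hA | hB
      · exact s.symm' (hρs hA)
      · exact s.trans' (s.symm' (hρs hB)) (s.symm' hAB)
    apply top_unique
    intro i k _
    exact s.trans' (key i) (s.symm' (key k))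
  · intro htop
    set inAB : Fin (m + 2) → Prop :=
      fun i => ρ.r i (Fin.last (m + 1)) ∨ ρ.r i ((Fin.last m).castSucc) with hin
    have symAB : ∀ {i k}, ρ.r i k → inAB k → inAB i := by
      intro i k hik h
      rcases h with h | h
      · exact Or.inl (ρ.trans' hik h)
      · exact Or.inr (ρ.trans' hik h)
    set τ₀ : Setoid (Fin (m + 2)) :=
      ⟨fun i k => ρ.r i k ∨ (inAB i ∧ inAB k),
       ⟨fun i => Or.inl (ρ.refl' i),
        by rintro i k (h | ⟨h1, h2⟩)
           · exact Or.inl (ρ.symm' h)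
           · exact Or.inr ⟨h2, h1⟩,
        by rintro i k l (h | ⟨h1, h2⟩) (h' | ⟨h1', h2'⟩)
           · exact Or.inl (ρ.trans' h h')
           · exact Or.inr ⟨symAB h h1', h2'⟩
           · exact Or.inr ⟨h1, symAB (ρ.symm' h') h2⟩
           · exact Or.inr ⟨h1, h2'⟩⟩⟩ with hτ₀
    have hρτ : ρ ≤ τ₀ := fun i k h => Or.inl h
    have hPτ : pairAB m ≤ τ₀ := pair_le_iff.mpr
      (Or.inr ⟨Or.inl (ρ.refl' _), Or.inr (ρ.refl' _)⟩)
    have hτtop : τ₀ = ⊤ := top_unique (htop ▸ sup_le hρτ hPτ)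
    have hall : ∀ i, ρ.r i (Fin.last (m + 1)) ∨ ρ.r i ((Fin.last m).castSucc) := by
      intro i
      have : τ₀.r i (Fin.last (m + 1)) := hτtop ▸ trivial
      rcases this with h | ⟨h1, -⟩
      · exact Or.inl h
      · exact h1
    constructor
    · have hsub : ρ.classes ⊆
          {{x | ρ.r x (Fin.last (m + 1))}, {x | ρ.r x ((Fin.last m).castSucc)}} := by
        rintro b ⟨y, rfl⟩
        rcases hall y with h | h
        · left
          ext x
          exact ⟨fun hx => ρ.trans' hx h, fun hx => ρ.trans' hx (ρ.symm' h)⟩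
        · right
          ext x
          exact ⟨fun hx => ρ.trans' hx h, fun hx => ρ.trans' hx (ρ.symm' h)⟩
      calc ρ.classes.ncard
          ≤ ({{x | ρ.r x (Fin.last (m + 1))}, {x | ρ.r x ((Fin.last m).castSucc)}} :
              Set (Set (Fin (m + 2)))).ncard :=
            Set.ncard_le_ncard hsub (Set.toFinite _)
        _ ≤ 1 + 1 := le_trans (Set.ncard_insert_le _ _)
            (by rw [Set.ncard_singleton])
        _ = 2 := rfl
    · rintro b ⟨y, rfl⟩
      rcases hall y with h | h
      · exact Or.inl (ρ.symm' h)
      · exact Or.inr (ρ.symm' h)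

/-- Evaluation of `up` on a power sum. -/
lemma up_pfun {m : ℕ} (σ : Setoid (Fin (m + 1))) (w : Fin (m + 2) → ℕ) :
    (if w (Fin.last (m + 1)) = w ((Fin.last m).castSucc) then pfun σ (Fin.init w) else 0)
      = pfun (jmap σ) w := by
  by_cases h : w (Fin.last (m + 1)) = w ((Fin.last m).castSucc)
  · rw [if_pos h]
    unfold pfun
    have hw : ∀ i : Fin (m + 2), w ((qmap m i).castSucc) = w i := by
      intro i
      by_cases hi : i = Fin.last (m + 1)
      · subst hi
        have : (qmap m (Fin.last (m + 1))).castSucc = (Fin.last m).castSucc := by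
          apply Fin.ext; simp [qmap, Fin.last]
        rw [this, ← h]
      · have : (qmap m i).castSucc = i := by
          apply Fin.ext
          simp only [qmap, Fin.coe_castSucc]
          have := i.isLt
          have : i.1 ≠ m + 1 := fun hc => hi (Fin.ext hc)
          omega
        rw [this]
    apply if_congr _ rfl rfl
    constructor
    · intro hc i k hr
      have : σ.r (qmap m i) (qmap m k) := hr
      have := hc _ _ this
      simp only [Fin.init] at this
      rw [← hw i, ← hw k]
      exact this
    · intro hc i k hr
      have : (jmap σ).r i.castSucc k.castSucc := by
        show σ.r (qmap m i.castSucc) (qmap m k.castSucc)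
        rw [q_castSucc, q_castSucc]
        exact hr
      exact hc _ _ this
  · rw [if_neg h]
    unfold pfun
    rw [if_neg]
    intro hc
    apply h
    apply hc
    show σ.r (qmap m (Fin.last (m + 1))) (qmap m ((Fin.last m).castSucc))
    rw [q_AB]

/-! ### The coefficient identity -/

section coeff
variable {m : ℕ}

/-- the RHS index predicate -/
def condS (m : ℕ) (σ : Setoid (Fin (m + 2))) : Prop :=
  σ.classes.ncard ≤ 2 ∧
    ∀ b ∈ σ.classes, Fin.last (m + 1) ∈ b ∨ (Fin.last m).castSucc ∈ b

lemma coeff_eq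
    (mu₁ : Setoid (Fin (m + 1)) → Setoid (Fin (m + 1)) → ℚ) (hmu₁ : MoebiusPi (m + 1) mu₁)
    (mu₂ : Setoid (Fin (m + 2)) → Setoid (Fin (m + 2)) → ℚ) (hmu₂ : MoebiusPi (m + 2) mu₂)
    (π : Setoid (Fin (m + 2))) :
    (∑ σ : Setoid (Fin (m + 2)), if condS m σ ∧ π ≤ σ then mu₂ π σ else 0)
      = if pairAB m ≤ π then mu₁ (rmap π) ⊤ else 0 := by
  set F : Setoid (Fin (m + 2)) → ℚ :=
    fun τ => ∑ σ : Setoid (Fin (m + 2)), if condS m σ ∧ τ ≤ σ then mu₂ τ σ else 0 with hF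
  set G : Setoid (Fin (m + 2)) → ℚ :=
    fun τ => if pairAB m ≤ τ then mu₁ (rmap τ) ⊤ else 0 with hG
  -- upper sums of F
  have h5 : ∀ ρ : Setoid (Fin (m + 2)),
      (∑ τ : Setoid (Fin (m + 2)), if ρ ≤ τ then F τ else 0)
        = if condS m ρ then 1 else 0 := by
    intro ρ
    have step1 : (∑ τ : Setoid (Fin (m + 2)), if ρ ≤ τ then F τ else 0)
        = ∑ τ : Setoid (Fin (m + 2)), ∑ σ : Setoid (Fin (m + 2)),
            if condS m σ ∧ (ρ ≤ τ ∧ τ ≤ σ) then mu₂ τ σ else 0 := by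
      apply Finset.sum_congr rfl
      intro τ _
      by_cases h : ρ ≤ τ
      · rw [if_pos h, hF]
        apply Finset.sum_congr rfl
        intro σ _
        by_cases h2 : condS m σ ∧ τ ≤ σ
        · rw [if_pos h2, if_pos ⟨h2.1, h, h2.2⟩]
        · rw [if_neg h2, if_neg (by rintro ⟨hc, -, hl⟩; exact h2 ⟨hc, hl⟩)]
      · rw [if_neg h]
        symm
        apply Finset.sum_eq_zero
        intro σ _
        rw [if_neg (by rintro ⟨-, hl, -⟩; exact h hl)]
    rw [step1, Finset.sum_comm]
    have step2 : ∀ σ : Setoid (Fin (m + 2)),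
        (∑ τ : Setoid (Fin (m + 2)), if condS m σ ∧ (ρ ≤ τ ∧ τ ≤ σ) then mu₂ τ σ else 0)
          = if ρ = σ then (if condS m σ then 1 else 0) else 0 := by
      intro σ
      by_cases hc : condS m σ
      · have e1 : (∑ τ : Setoid (Fin (m + 2)),
            if condS m σ ∧ (ρ ≤ τ ∧ τ ≤ σ) then mu₂ τ σ else 0)
            = ∑ τ : Setoid (Fin (m + 2)), if ρ ≤ τ ∧ τ ≤ σ then mu₂ τ σ else 0 := by
          apply Finset.sum_congr rfl
          intro τ _
          by_cases h2 : ρ ≤ τ ∧ τ ≤ σ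
          · rw [if_pos ⟨hc, h2⟩, if_pos h2]
          · rw [if_neg (by rintro ⟨-, h3⟩; exact h2 h3), if_neg h2]
        rw [e1, moebius_zm hmu₂ ρ σ]
        by_cases he : ρ = σ
        · rw [if_pos he, if_pos he, if_pos hc]
        · rw [if_neg he, if_neg he]
      · rw [if_neg hc, ite_self]
        apply Finset.sum_eq_zero
        intro τ _
        rw [if_neg (by rintro ⟨h1, -⟩; exact hc h1)]
    calc (∑ σ : Setoid (Fin (m + 2)), ∑ τ : Setoid (Fin (m + 2)),
            if condS m σ ∧ (ρ ≤ τ ∧ τ ≤ σ) then mu₂ τ σ else 0)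
        = ∑ σ : Setoid (Fin (m + 2)),
            if ρ = σ then (if condS m σ then 1 else 0) else 0 :=
          Finset.sum_congr rfl fun σ _ => step2 σ
      _ = if condS m ρ then 1 else 0 := by
          rw [Finset.sum_ite_eq, if_pos (Finset.mem_univ ρ)]
  -- upper sums of G
  have h6 : ∀ ρ : Setoid (Fin (m + 2)),
      (∑ τ : Setoid (Fin (m + 2)), if ρ ≤ τ then G τ else 0)
        = if condS m ρ then 1 else 0 := by
    intro ρ
    set c : Setoid (Fin (m + 1)) := rmap (ρ ⊔ pairAB m) with hc
    have step1 : (∑ τ : Setoid (Fin (m + 2)), if ρ ≤ τ then G τ else 0)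
        = ∑ τ : Setoid (Fin (m + 2)),
            if pairAB m ≤ τ then (if ρ ⊔ pairAB m ≤ τ then mu₁ (rmap τ) ⊤ else 0) else 0 := by
      apply Finset.sum_congr rfl
      intro τ _
      simp only [hG]
      by_cases h1 : ρ ≤ τ <;> by_cases h2 : pairAB m ≤ τ
      · rw [if_pos h1, if_pos h2, if_pos h2, if_pos (sup_le h1 h2)]
      · rw [if_pos h1, if_neg h2, if_neg h2]
      · rw [if_neg h1, if_pos h2,
          if_neg (fun hs => h1 (le_trans le_sup_left hs))]
      · rw [if_neg h1, if_neg h2]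
    rw [step1, ← sum_reindex (fun τ => if ρ ⊔ pairAB m ≤ τ then mu₁ (rmap τ) ⊤ else 0)]
    have step2 : (∑ σ : Setoid (Fin (m + 1)),
          if ρ ⊔ pairAB m ≤ jmap σ then mu₁ (rmap (jmap σ)) ⊤ else 0)
        = ∑ σ : Setoid (Fin (m + 1)), if c ≤ σ ∧ σ ≤ ⊤ then mu₁ σ ⊤ else 0 := by
      apply Finset.sum_congr rfl
      intro σ _
      have hiff : ρ ⊔ pairAB m ≤ jmap σ ↔ c ≤ σ := by
        rw [le_j_iff, hc, sup_assoc, sup_idem]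
      by_cases h : c ≤ σ
      · rw [if_pos (hiff.mpr h), if_pos ⟨h, le_top⟩, r_j]
      · rw [if_neg (fun hh => h (hiff.mp hh)), if_neg (fun hh => h hh.1)]
    rw [step2, moebius_zm hmu₁ c ⊤]
    have hctop : c = ⊤ ↔ condS m ρ := by
      rw [hc, condS, cond_iff]
      constructor
      · intro h
        have hab : (ρ ⊔ pairAB m).r (Fin.last (m + 1)) ((Fin.last m).castSucc) :=
          pair_le_iff.mp le_sup_right
        rw [← j_r hab, h, j_top]
      · intro h
        rw [h, r_top]
    by_cases h : condS m ρ
    · rw [if_pos (hctop.mpr h), if_pos h]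
    · rw [if_neg (fun hh => h (hctop.mp hh)), if_neg h]
  -- Möbius inversion: a function is determined by its upper sums
  have inv : ∀ H : Setoid (Fin (m + 2)) → ℚ,
      (∑ ρ : Setoid (Fin (m + 2)),
        if π ≤ ρ then mu₂ π ρ * (∑ τ : Setoid (Fin (m + 2)), if ρ ≤ τ then H τ else 0) else 0)
      = H π := by
    intro H
    have step1 : (∑ ρ : Setoid (Fin (m + 2)),
        if π ≤ ρ then mu₂ π ρ * (∑ τ : Setoid (Fin (m + 2)), if ρ ≤ τ then H τ else 0) else 0)
        = ∑ ρ : Setoid (Fin (m + 2)), ∑ τ : Setoid (Fin (m + 2)),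
            if π ≤ ρ ∧ ρ ≤ τ then mu₂ π ρ * H τ else 0 := by
      apply Finset.sum_congr rfl
      intro ρ _
      by_cases h : π ≤ ρ
      · rw [if_pos h, Finset.mul_sum]
        apply Finset.sum_congr rfl
        intro τ _
        by_cases h2 : ρ ≤ τ
        · rw [if_pos h2, if_pos ⟨h, h2⟩]
        · rw [if_neg h2, if_neg (by rintro ⟨-, hl⟩; exact h2 hl), mul_zero]
      · rw [if_neg h]
        symm
        apply Finset.sum_eq_zero
        intro τ _
        rw [if_neg (by rintro ⟨hl, -⟩; exact h hl)]
    rw [step1, Finset.sum_comm]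
    have step2 : ∀ τ : Setoid (Fin (m + 2)),
        (∑ ρ : Setoid (Fin (m + 2)), if π ≤ ρ ∧ ρ ≤ τ then mu₂ π ρ * H τ else 0)
          = (if π = τ then 1 else 0) * H τ := by
      intro τ
      have e1 : (∑ ρ : Setoid (Fin (m + 2)), if π ≤ ρ ∧ ρ ≤ τ then mu₂ π ρ * H τ else 0)
          = (∑ ρ : Setoid (Fin (m + 2)), if π ≤ ρ ∧ ρ ≤ τ then mu₂ π ρ else 0) * H τ := by
        rw [Finset.sum_mul]
        apply Finset.sum_congr rfl
        intro ρ _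
        by_cases h : π ≤ ρ ∧ ρ ≤ τ
        · rw [if_pos h, if_pos h]
        · rw [if_neg h, if_neg h, zero_mul]
      rw [e1, moebius_mz hmu₂ π τ]
    calc (∑ τ : Setoid (Fin (m + 2)), ∑ ρ : Setoid (Fin (m + 2)),
            if π ≤ ρ ∧ ρ ≤ τ then mu₂ π ρ * H τ else 0)
        = ∑ τ : Setoid (Fin (m + 2)), (if π = τ then 1 else 0) * H τ :=
          Finset.sum_congr rfl fun τ _ => step2 τ
      _ = ∑ τ : Setoid (Fin (m + 2)), if π = τ then H τ else 0 := by
          apply Finset.sum_congr rfl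
          intro τ _
          rw [ite_mul, one_mul, zero_mul]
      _ = H π := by rw [Finset.sum_ite_eq, if_pos (Finset.mem_univ π)]
  -- combine
  have : F π = G π := by
    rw [← inv F, ← inv G]
    apply Finset.sum_congr rfl
    intro ρ _
    by_cases h : π ≤ ρ
    · rw [if_pos h, if_pos h, h5 ρ, h6 ρ]
    · rw [if_neg h, if_neg h]
  exact this
end coeff

/-- the induction of the Schur function indexed by the one-block
partition of [n-1] is the sum of the Schur functions x_sigma over set
partitions sigma of [n] with at most two blocks, each block containing one of
the top two elements. -/
theorem x_top_up (m : ℕ)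
    (mu₁ : Setoid (Fin (m + 1)) → Setoid (Fin (m + 1)) → ℚ) (hmu₁ : MoebiusPi (m + 1) mu₁)
    (mu₂ : Setoid (Fin (m + 2)) → Setoid (Fin (m + 2)) → ℚ) (hmu₂ : MoebiusPi (m + 2) mu₂) :
    up (xf mu₁ (⊤ : Setoid (Fin (m + 1)))) =
      ∑ σ : Setoid (Fin (m + 2)),
        if σ.classes.ncard ≤ 2 ∧
            (∀ b ∈ σ.classes, Fin.last (m + 1) ∈ b ∨ (Fin.last m).castSucc ∈ b)
        then xf mu₂ σ else 0 := by
  have hconv : (∑ σ : Setoid (Fin (m + 2)),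
        if σ.classes.ncard ≤ 2 ∧
            (∀ b ∈ σ.classes, Fin.last (m + 1) ∈ b ∨ (Fin.last m).castSucc ∈ b)
        then xf mu₂ σ else 0)
      = ∑ σ : Setoid (Fin (m + 2)), if condS m σ then xf mu₂ σ else 0 :=
    Finset.sum_congr rfl fun σ _ => if_congr Iff.rfl rfl rfl
  rw [hconv]
  funext w
  rw [Finset.sum_apply]
  show up (xf mu₁ (⊤ : Setoid (Fin (m + 1)))) w
      = ∑ σ : Setoid (Fin (m + 2)), (if condS m σ then xf mu₂ σ else 0) w
  -- evaluate the right-hand side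
  have hR : (∑ σ : Setoid (Fin (m + 2)), (if condS m σ then xf mu₂ σ else 0) w)
      = ∑ τ : Setoid (Fin (m + 2)),
          (∑ σ : Setoid (Fin (m + 2)), if condS m σ ∧ τ ≤ σ then mu₂ τ σ else 0)
            * pfun τ w := by
    have e1 : ∀ σ : Setoid (Fin (m + 2)),
        (if condS m σ then xf mu₂ σ else 0) w
          = ∑ τ : Setoid (Fin (m + 2)),
              if condS m σ ∧ τ ≤ σ then mu₂ τ σ * pfun τ w else 0 := by
      intro σ
      by_cases hc : condS m σ
      · rw [if_pos hc]
        unfold xf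
        rw [Finset.sum_apply]
        apply Finset.sum_congr rfl
        intro τ _
        by_cases hl : τ ≤ σ
        · rw [if_pos hl, if_pos ⟨hc, hl⟩, Pi.smul_apply, smul_eq_mul]
        · rw [if_neg hl, if_neg (by rintro ⟨-, h⟩; exact hl h), Pi.zero_apply]
      · rw [if_neg hc, Pi.zero_apply]
        symm
        apply Finset.sum_eq_zero
        intro τ _
        rw [if_neg (by rintro ⟨h, -⟩; exact hc h)]
    calc (∑ σ : Setoid (Fin (m + 2)), (if condS m σ then xf mu₂ σ else 0) w)
        = ∑ σ : Setoid (Fin (m + 2)), ∑ τ : Setoid (Fin (m + 2)),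
            if condS m σ ∧ τ ≤ σ then mu₂ τ σ * pfun τ w else 0 :=
          Finset.sum_congr rfl fun σ _ => e1 σ
      _ = ∑ τ : Setoid (Fin (m + 2)), ∑ σ : Setoid (Fin (m + 2)),
            if condS m σ ∧ τ ≤ σ then mu₂ τ σ * pfun τ w else 0 := Finset.sum_comm
      _ = ∑ τ : Setoid (Fin (m + 2)),
            (∑ σ : Setoid (Fin (m + 2)), if condS m σ ∧ τ ≤ σ then mu₂ τ σ else 0)
              * pfun τ w := by
          apply Finset.sum_congr rfl
          intro τ _
          rw [Finset.sum_mul]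
          apply Finset.sum_congr rfl
          intro σ _
          by_cases h : condS m σ ∧ τ ≤ σ
          · rw [if_pos h, if_pos h]
          · rw [if_neg h, if_neg h, zero_mul]
  -- evaluate the left-hand side
  have hL : up (xf mu₁ (⊤ : Setoid (Fin (m + 1)))) w
      = ∑ τ : Setoid (Fin (m + 2)),
          (if pairAB m ≤ τ then mu₁ (rmap τ) ⊤ else 0) * pfun τ w := by
    have e0 : xf mu₁ (⊤ : Setoid (Fin (m + 1))) (Fin.init w)
        = ∑ σ : Setoid (Fin (m + 1)), mu₁ σ ⊤ * pfun σ (Fin.init w) := by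
      unfold xf
      rw [Finset.sum_apply]
      apply Finset.sum_congr rfl
      intro σ _
      rw [if_pos le_top, Pi.smul_apply, smul_eq_mul]
    have e1 : up (xf mu₁ (⊤ : Setoid (Fin (m + 1)))) w
        = ∑ σ : Setoid (Fin (m + 1)), mu₁ σ ⊤ * pfun (jmap σ) w := by
      unfold up
      by_cases h : w (Fin.last (m + 1)) = w ((Fin.last m).castSucc)
      · rw [if_pos h, e0]
        apply Finset.sum_congr rfl
        intro σ _
        rw [← up_pfun σ w, if_pos h]
      · rw [if_neg h]
        symm
        apply Finset.sum_eq_zero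
        intro σ _
        rw [← up_pfun σ w, if_neg h, mul_zero]
    rw [e1]
    have e2 : (∑ σ : Setoid (Fin (m + 1)), mu₁ σ ⊤ * pfun (jmap σ) w)
        = ∑ σ : Setoid (Fin (m + 1)),
            (fun τ => mu₁ (rmap τ) ⊤ * pfun τ w) (jmap σ) := by
      apply Finset.sum_congr rfl
      intro σ _
      simp only [r_j]
    rw [e2, sum_reindex (fun τ => mu₁ (rmap τ) ⊤ * pfun τ w)]
    apply Finset.sum_congr rfl
    intro τ _
    by_cases h : pairAB m ≤ τ
    · rw [if_pos h, if_pos h]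
    · rw [if_neg h, if_neg h, zero_mul]
  rw [hL, hR]
  apply Finset.sum_congr rfl
  intro τ _
  rw [coeff_eq mu₁ hmu₁ mu₂ hmu₂ τ]

end
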